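/- arXiv:0808.0748 — 3 statements merged into one kernel-verified Lean document; each statement's English description precedes it below -/
import Mathlib

section
/- If n is a positive multiple of 4 and t = π·k/2 for an integer k ≥ 1, then |[exp(-ι·t·H(K_n^-))]_{1,1}| = 1 and [exp(-ι·t·H(K_n^-))]_{1,n} = 0. -/
/-!
Write `J` for the all-ones matrix and `P` for the Laplacian of the missing edge. Then
`H = c • 1 + 2 • J + 2 • P` with a real scalar `c`, and `J / n`, `P / 2` are commuting
idempotents (they are rank-one projections onto the orthogonal vectors `𝟙` and `e₁ - eₙ`).
For an idempotent `E`, `exp (z • E) = 1 + (exp z - 1) • E`. At `t = πk/2` both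
`exp (-ιt · 2n)` and `exp (-ιt · 4)` equal `1` because `4 ∣ n`, so `exp (-ιtH)` is the
scalar matrix `exp (-ιtc) • 1`, whose diagonal entries have modulus one and whose
off-diagonal entries vanish.
-/

open NormedSpace Matrix
open scoped Nat

theorem IsIdempotentElem.exp_smul {𝔸 : Type*} [Ring 𝔸] [Algebra ℂ 𝔸] [TopologicalSpace 𝔸]
    [IsTopologicalRing 𝔸] [ContinuousSMul ℂ 𝔸] [T2Space 𝔸] {E : 𝔸} (hE : IsIdempotentElem E)
    (z : ℂ) : exp (z • E) = 1 + (Complex.exp z - 1) • E := by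
  have hseries : HasSum (fun m : ℕ => (m !⁻¹ : ℂ) • (z • E) ^ m)
      (Complex.exp z • E + (1 - E)) := by
    have := ((exp_series_hasSum_exp' (𝕂 := ℂ) z).smul_const E).add (hasSum_ite_eq 0 (1 - E))
    rw [← Complex.exp_eq_exp_ℂ] at this
    convert this using 1
    funext m
    rcases m with _ | m
    · simp
    · simp [smul_pow, hE.pow_succ_eq, smul_smul]
  rw [congrFun (exp_eq_tsum ℂ) _, hseries.tsum_eq]
  module

namespace Matrix

variable {m R : Type*}

theorem isIdempotentElem_inv_dotProduct_smul_vecMulVec [Fintype m] [Field R] {u : m → R}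
    (hu : u ⬝ᵥ u ≠ 0) : IsIdempotentElem ((u ⬝ᵥ u)⁻¹ • vecMulVec u u) := by
  rw [IsIdempotentElem, smul_mul_smul, vecMulVec_mul_vecMulVec, vecMulVec_smul, smul_smul,
    mul_assoc, inv_mul_cancel₀ hu, mul_one]

theorem commute_vecMulVec_self_of_dotProduct_eq_zero [Fintype m] [CommSemiring R]
    {u w : m → R} (h : u ⬝ᵥ w = 0) : Commute (vecMulVec u u) (vecMulVec w w) := by
  simp [Commute, SemiconjBy, vecMulVec_mul_vecMulVec, h, dotProduct_comm w u]

theorem of_one_eq_vecMulVec_one_one [Semiring R] :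
    (of fun _ _ => 1 : Matrix m m R) = vecMulVec 1 1 := by
  ext; simp [vecMulVec_apply]

theorem of_ite_eq_vecMulVec_single_sub_single [DecidableEq m] [Ring R] {a b : m}
    (hab : a ≠ b) :
    (of fun i j => if (i = a ∧ j = a) ∨ (i = b ∧ j = b) then 1
      else if (i = a ∧ j = b) ∨ (i = b ∧ j = a) then -1 else 0 : Matrix m m R)
      = vecMulVec (Pi.single a 1 - Pi.single b 1) (Pi.single a 1 - Pi.single b 1) := by
  have hba := hab.symm
  ext i j
  by_cases hia : i = a <;> by_cases hib : i = b <;> by_cases hja : j = a <;>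
    by_cases hjb : j = b <;> simp [vecMulVec_apply, *]

theorem exp_smul_one_add_smul_add_smul [Fintype m] [DecidableEq m] {E F : Matrix m m ℂ}
    (hE : IsIdempotentElem E) (hF : IsIdempotentElem F) (hEF : Commute E F) (x y z : ℂ)
    (hy : Complex.exp y = 1) (hz : Complex.exp z = 1) :
    exp (x • 1 + y • E + z • F) = Complex.exp x • 1 := by
  have hone : exp (x • (1 : Matrix m m ℂ)) = Complex.exp x • 1 := by
    rw [IsIdempotentElem.one.exp_smul]
    module
  rw [add_assoc, exp_add_of_commute _ _ ((Commute.one_left _).smul_left x),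
    exp_add_of_commute _ _ ((hEF.smul_left y).smul_right z), hone, hE.exp_smul, hF.exp_smul,
    hy, hz]
  simp

end Matrix

theorem Complex.exp_neg_I_mul_pi_mul_half_mul_eq_one (k N : ℕ) (hN : 4 ∣ N) :
    exp (-(I * (Real.pi * k / 2 : ℝ)) * N) = 1 := by
  obtain ⟨m, rfl⟩ := hN
  rw [Complex.exp_eq_one_iff]
  exact ⟨-(k * m), by push_cast; ring⟩

theorem complete_minus_edge_perfect_return_general (n : ℕ) (hmod : n % 4 = 0)
    (k : ℕ) (t : ℝ) (ht : t = Real.pi * k / 2)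
    (a b : Fin n) (ha : (a : ℕ) = 0) (hb : (b : ℕ) = n - 1)
    (P : Matrix (Fin n) (Fin n) ℂ)
    (hP : P = Matrix.of fun i j =>
      if (i = a ∧ j = a) ∨ (i = b ∧ j = b) then 1
      else if (i = a ∧ j = b) ∨ (i = b ∧ j = a) then -1 else 0)
    (H : Matrix (Fin n) (Fin n) ℂ)
    (hH : H = (n * (n - 1) / 2 - 1 : ℂ) • (1 : Matrix (Fin n) (Fin n) ℂ)
        - 2 • ((n : ℂ) • (1 : Matrix (Fin n) (Fin n) ℂ)
            - (Matrix.of fun _ _ : Fin n => (1 : ℂ)) - P)) :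
    ‖NormedSpace.exp ((-(Complex.I * t)) • H) a a‖ = 1 ∧
    NormedSpace.exp ((-(Complex.I * t)) • H) a b = 0 := by
  have hn : 4 ≤ n := by have := a.pos; omega
  have hn0 : (n : ℂ) ≠ 0 := by exact_mod_cast (by omega : n ≠ 0)
  have hab : a ≠ b := fun h => by rw [h] at ha; omega
  set s : ℂ := -(Complex.I * t)
  set v : Fin n → ℂ := Pi.single a 1 - Pi.single b 1
  have h11 : (1 : Fin n → ℂ) ⬝ᵥ 1 = n := by simp
  have hvv : v ⬝ᵥ v = 2 := by norm_num [v, hab, hab.symm]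
  have h1v : (1 : Fin n → ℂ) ⬝ᵥ v = 0 := by simp [v]
  set c : ℝ := n * (n - 1) / 2 - 1 - 2 * n
  have hdecomp : s • H = (s * c) • 1
      + (s * (2 * n)) • (((1 : Fin n → ℂ) ⬝ᵥ 1)⁻¹ • vecMulVec 1 1)
      + (s * 4) • ((v ⬝ᵥ v)⁻¹ • vecMulVec v v) := by
    rw [hH, hP, of_ite_eq_vecMulVec_single_sub_single hab, of_one_eq_vecMulVec_one_one, h11, hvv]
    match_scalars <;> field_simp <;> push_cast [c] <;> ring
  have hexpJ : Complex.exp (s * (2 * n)) = 1 := by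
    simpa [s, ht] using Complex.exp_neg_I_mul_pi_mul_half_mul_eq_one k (2 * n) (by omega)
  have hexpP : Complex.exp (s * 4) = 1 := by
    simpa [s, ht] using Complex.exp_neg_I_mul_pi_mul_half_mul_eq_one k 4 dvd_rfl
  have hexp : NormedSpace.exp (s • H) = Complex.exp (s * c) • 1 := by
    rw [hdecomp]
    exact exp_smul_one_add_smul_add_smul
      (isIdempotentElem_inv_dotProduct_smul_vecMulVec (h11 ▸ hn0))
      (isIdempotentElem_inv_dotProduct_smul_vecMulVec (by simp [hvv]))
      (((commute_vecMulVec_self_of_dotProduct_eq_zero h1v).smul_left _).smul_right _)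
      _ _ _ hexpJ hexpP
  constructor
  · rw [hexp, Matrix.smul_apply, one_apply_eq, smul_eq_mul, mul_one,
      show s * c = ((-(t * c) : ℝ) : ℂ) * Complex.I by push_cast [s]; ring]
    exact Complex.norm_exp_ofReal_mul_I _
  · rw [hexp, Matrix.smul_apply, one_apply_ne hab, smul_zero]

/-- If `n` is a positive multiple of 4 and `t = πk/2` (integer `k ≥ 1`),
then `|[exp(-ιtH(K_n^-))]_{a,a}| = 1` and `[exp(-ιtH(K_n^-))]_{a,b} = 0`. -/
theorem complete_minus_edge_perfect_return (n : ℕ) (hn : 4 ≤ n) (hmod : n % 4 = 0)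
    (k : ℕ) (hk : 1 ≤ k) (t : ℝ) (ht : t = Real.pi * k / 2)
    (a b : Fin n) (ha : (a : ℕ) = 0) (hb : (b : ℕ) = n - 1)
    (P : Matrix (Fin n) (Fin n) ℂ)
    (hP : P = Matrix.of fun i j =>
      if (i = a ∧ j = a) ∨ (i = b ∧ j = b) then 1
      else if (i = a ∧ j = b) ∨ (i = b ∧ j = a) then -1 else 0)
    (H : Matrix (Fin n) (Fin n) ℂ)
    (hH : H = (n * (n - 1) / 2 - 1 : ℂ) • (1 : Matrix (Fin n) (Fin n) ℂ)
        - 2 • ((n : ℂ) • (1 : Matrix (Fin n) (Fin n) ℂ)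
            - (Matrix.of fun _ _ : Fin n => (1 : ℂ)) - P)) :
    ‖NormedSpace.exp ((-(Complex.I * t)) • H) a a‖ = 1 ∧
    NormedSpace.exp ((-(Complex.I * t)) • H) a b = 0 :=
  complete_minus_edge_perfect_return_general n hmod k t ht a b ha hb P hP H hH
end

section
/- For n a multiple of 4, vertices i, j with 1 < i < n, 1 < j < n, i ≠ j, and any t ∈ ℝ, the fidelity satisfies |[exp(-ι·t·H(K_n^-))]_{ij}| ≤ 2/n; thus no perfect state transfer occurs between any pair of adjacent interior vertices of K_n^-. -/
/-!
With `c = n(n-1)/2 - 1`, the Hamiltonian is `H = (c - 2n) • 1 + 2J + 2P`, where `J = 𝟙𝟙ᵀ` and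
`P = wwᵀ` for `w = e_a - e_b`. As `𝟙 ⬝ᵥ w = 0`, the rank-one projections `E = J / n` and
`F = P / 2` are orthogonal idempotents, and with `1 - E - F` they form a complete family; hence
`H = (c - 2n)(1 - E - F) + c E + (c - 2n + 4) F` and `exp(-itH)` is obtained by exponentiating the
three eigenvalues. At an interior vertex `i` the vector `w` vanishes, so for `i ≠ j` only `E` and
`1 - E - F` contribute, and `[exp(-itH)]ᵢⱼ = n⁻¹ (e^{-itc} - e^{-it(c - 2n)})`, a difference of two
unimodular numbers divided by `n`.
-/

section Exponential

open NormedSpace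

theorem CompleteOrthogonalIdempotents.sum_smul_pow {K R I : Type*} [CommSemiring K] [Semiring R]
    [Algebra K R] [Fintype I] {e : I → R} (he : CompleteOrthogonalIdempotents e) (μ : I → K)
    (k : ℕ) : (∑ i, μ i • e i) ^ k = ∑ i, μ i ^ k • e i := by
  classical
  induction k with
  | zero => simp [he.complete]
  | succ k ih =>
    simp [pow_succ, ih, Finset.sum_mul, Finset.mul_sum, he.mul_eq, smul_smul, mul_comm]

theorem CompleteOrthogonalIdempotents.exp_sum_smul {𝕂 𝔸 I : Type*} [RCLike 𝕂] [NormedRing 𝔸]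
    [NormedAlgebra 𝕂 𝔸] [CompleteSpace 𝔸] [Fintype I] {e : I → 𝔸}
    (he : CompleteOrthogonalIdempotents e) (μ : I → 𝕂) :
    exp (∑ i, μ i • e i) = ∑ i, exp (μ i) • e i := by
  have hμ (i : I) := expSeries_summable' (𝕂 := 𝕂) (μ i)
  calc exp (∑ i, μ i • e i)
      = ∑' k : ℕ, ∑ i, ((k.factorial⁻¹ : 𝕂) • μ i ^ k) • e i := by
        simp only [exp_eq_tsum 𝕂, he.sum_smul_pow, Finset.smul_sum, smul_assoc]
    _ = ∑ i, (∑' k : ℕ, (k.factorial⁻¹ : 𝕂) • μ i ^ k) • e i := by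
        rw [Summable.tsum_finsetSum fun i _ => (hμ i).smul_const (e i)]
        exact Finset.sum_congr rfl fun i _ => (hμ i).tsum_smul_const (e i)
    _ = ∑ i, exp (μ i) • e i := by simp only [exp_eq_tsum 𝕂]

end Exponential

open scoped Matrix.Norms.Operator in
theorem Matrix.exp_sum_smul_of_completeOrthogonalIdempotents {𝕂 m I : Type*} [RCLike 𝕂]
    [Fintype m] [DecidableEq m] [Fintype I] {e : I → Matrix m m 𝕂}
    (he : CompleteOrthogonalIdempotents e) (μ : I → 𝕂) :
    NormedSpace.exp (∑ i, μ i • e i) = ∑ i, NormedSpace.exp (μ i) • e i :=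
  he.exp_sum_smul μ

namespace Matrix

variable {K ι : Type*} [Field K] [Fintype ι]

/-- The projection onto the line `K ∙ u` along `{v | u ⬝ᵥ v = 0}`. -/
def rankOneProj (u : ι → K) : Matrix ι ι K := (u ⬝ᵥ u)⁻¹ • vecMulVec u u

theorem rankOneProj_apply (u : ι → K) (i j : ι) : rankOneProj u i j = (u ⬝ᵥ u)⁻¹ * (u i * u j) :=
  rfl

theorem dotProduct_self_smul_rankOneProj {u : ι → K} (hu : u ⬝ᵥ u ≠ 0) :
    (u ⬝ᵥ u) • rankOneProj u = vecMulVec u u := by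
  rw [rankOneProj, smul_smul, mul_inv_cancel₀ hu, one_smul]

theorem rankOneProj_mul_rankOneProj (u v : ι → K) :
    rankOneProj u * rankOneProj v = ((u ⬝ᵥ u)⁻¹ * (v ⬝ᵥ v)⁻¹ * (u ⬝ᵥ v)) • vecMulVec u v := by
  simp only [rankOneProj, smul_mul_smul_comm, vecMulVec_mul_vecMulVec, vecMulVec_smul, smul_smul]

theorem isIdempotentElem_rankOneProj [DecidableEq ι] {u : ι → K} (hu : u ⬝ᵥ u ≠ 0) :
    IsIdempotentElem (rankOneProj u) := by
  rw [IsIdempotentElem, rankOneProj_mul_rankOneProj, inv_mul_cancel_right₀ hu, rankOneProj]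

theorem rankOneProj_mul_rankOneProj_of_dotProduct_eq_zero {u v : ι → K} (h : u ⬝ᵥ v = 0) :
    rankOneProj u * rankOneProj v = 0 := by
  rw [rankOneProj_mul_rankOneProj, h, mul_zero, zero_smul]

theorem orthogonalIdempotents_rankOneProj_pair [DecidableEq ι] {u v : ι → K} (hu : u ⬝ᵥ u ≠ 0)
    (hv : v ⬝ᵥ v ≠ 0) (huv : u ⬝ᵥ v = 0) :
    OrthogonalIdempotents ![rankOneProj u, rankOneProj v] where
  idem i := by
    fin_cases i
    exacts [isIdempotentElem_rankOneProj hu, isIdempotentElem_rankOneProj hv]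
  ortho i j hij := by
    fin_cases i <;> fin_cases j
    · exact absurd rfl hij
    · exact rankOneProj_mul_rankOneProj_of_dotProduct_eq_zero huv
    · exact rankOneProj_mul_rankOneProj_of_dotProduct_eq_zero (dotProduct_comm u v ▸ huv)
    · exact absurd rfl hij

theorem vecMulVec_one_one {R m n : Type*} [MulOneClass R] :
    vecMulVec (1 : m → R) (1 : n → R) = of fun _ _ => 1 := by
  ext; simp [vecMulVec_apply]

theorem vecMulVec_single_sub_single {R m : Type*} [Ring R] [DecidableEq m] {a b : m} (hab : a ≠ b) :
    vecMulVec (Pi.single a 1 - Pi.single b 1 : m → R) (Pi.single a 1 - Pi.single b 1) =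
      of fun i j => if (i = a ∧ j = a) ∨ (i = b ∧ j = b) then 1
        else if (i = a ∧ j = b) ∨ (i = b ∧ j = a) then -1 else 0 := by
  ext i j
  by_cases hia : i = a <;> by_cases hib : i = b <;> by_cases hja : j = a <;> by_cases hjb : j = b <;>
    simp_all [vecMulVec_apply]

section SingleSubSingle

variable {R m : Type*} [Ring R] [Fintype m] [DecidableEq m] {a b : m}

theorem single_sub_single_dotProduct_self (hab : a ≠ b) :
    (Pi.single a 1 - Pi.single b 1 : m → R) ⬝ᵥ (Pi.single a 1 - Pi.single b 1) = 2 := by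
  simp [dotProduct_sub, hab, hab.symm, one_add_one_eq_two]

theorem one_dotProduct_single_sub_single :
    (1 : m → R) ⬝ᵥ (Pi.single a 1 - Pi.single b 1) = 0 := by
  simp

end SingleSubSingle

theorem exp_smul_one_add_smul_rankOneProj_add_smul_rankOneProj {𝕂 ι : Type*} [RCLike 𝕂]
    [Fintype ι] [DecidableEq ι] {u v : ι → 𝕂} (hu : u ⬝ᵥ u ≠ 0) (hv : v ⬝ᵥ v ≠ 0)
    (huv : u ⬝ᵥ v = 0) (x y z : 𝕂) :
    NormedSpace.exp (x • 1 + y • rankOneProj u + z • rankOneProj v) =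
      NormedSpace.exp x • (1 - (rankOneProj u + rankOneProj v)) +
        NormedSpace.exp (x + y) • rankOneProj u + NormedSpace.exp (x + z) • rankOneProj v := by
  have hfamily := exp_sum_smul_of_completeOrthogonalIdempotents
    (.option (orthogonalIdempotents_rankOneProj_pair hu hv huv)) (Option.elim · x ![x + y, x + z])
  simp only [Fintype.sum_option, Fin.sum_univ_two, Option.elim, cons_val_zero, cons_val_one,
    ← add_assoc] at hfamily
  rw [← hfamily]
  congr 1
  module

end Matrix

theorem Complex.norm_exp_sub_exp_le_two {z w : ℂ} (hz : z.re = 0) (hw : w.re = 0) :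
    ‖exp z - exp w‖ ≤ 2 := by
  calc ‖exp z - exp w‖ ≤ ‖exp z‖ + ‖exp w‖ := norm_sub_le _ _
    _ = 2 := by rw [norm_exp, norm_exp, hz, hw, Real.exp_zero]; norm_num

open Matrix

theorem complete_minus_edge_interior_bound_general (n : ℕ) (hn : 4 ≤ n)
    (t : ℝ) (a b : Fin n) (ha : (a : ℕ) = 0) (hb : (b : ℕ) = n - 1)
    (P : Matrix (Fin n) (Fin n) ℂ)
    (hP : P = Matrix.of fun i j =>
      if (i = a ∧ j = a) ∨ (i = b ∧ j = b) then 1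
      else if (i = a ∧ j = b) ∨ (i = b ∧ j = a) then -1 else 0)
    (H : Matrix (Fin n) (Fin n) ℂ)
    (hH : H = (n * (n - 1) / 2 - 1 : ℂ) • (1 : Matrix (Fin n) (Fin n) ℂ)
        - 2 • ((n : ℂ) • (1 : Matrix (Fin n) (Fin n) ℂ)
            - (Matrix.of fun _ _ : Fin n => (1 : ℂ)) - P))
    (i j : Fin n) (hij : i ≠ j) (hia : i ≠ a) (hib : i ≠ b) :
    ‖NormedSpace.exp ((-(Complex.I * t)) • H) i j‖ ≤ 2 / n := by
  have hab : a ≠ b := Fin.ne_of_val_ne (by omega)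
  set w : Fin n → ℂ := Pi.single a 1 - Pi.single b 1
  have hone : (1 : Fin n → ℂ) ⬝ᵥ 1 = n := by simp
  have hone_ne : (1 : Fin n → ℂ) ⬝ᵥ 1 ≠ 0 := hone ▸ Nat.cast_ne_zero.mpr (by omega)
  have hw : w ⬝ᵥ w = 2 := single_sub_single_dotProduct_self hab
  have hw_ne : w ⬝ᵥ w ≠ 0 := hw ▸ two_ne_zero
  set E := rankOneProj (1 : Fin n → ℂ)
  set F := rankOneProj w
  set c : ℂ := n * (n - 1) / 2 - 1
  set s : ℂ := -(Complex.I * t)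
  have hspectral : s • H = (s * (c - 2 * n)) • 1 + (s * (2 * n)) • E + (s * 4) • F := by
    have hJ : (of fun _ _ => (1 : ℂ)) = (n : ℂ) • E := by
      rw [← vecMulVec_one_one, ← hone, dotProduct_self_smul_rankOneProj hone_ne]
    have hP' : P = (2 : ℂ) • F := by
      rw [hP, ← vecMulVec_single_sub_single hab, ← hw, dotProduct_self_smul_rankOneProj hw_ne]
    rw [hH, hJ, hP']
    module
  have hentry (x y z : ℂ) : (NormedSpace.exp x • (1 - (E + F)) + NormedSpace.exp (x + y) • E
      + NormedSpace.exp (x + z) • F) i j = (n : ℂ)⁻¹ * (Complex.exp (x + y) - Complex.exp x) := by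
    simp [E, F, rankOneProj_apply, w, hij, hia, hib, hone, ← Complex.exp_eq_exp_ℂ]
    ring
  rw [hspectral, exp_smul_one_add_smul_rankOneProj_add_smul_rankOneProj hone_ne hw_ne
    one_dotProduct_single_sub_single, hentry, norm_mul, norm_inv, Complex.norm_natCast,
    div_eq_inv_mul]
  gcongr
  exact Complex.norm_exp_sub_exp_le_two (by simp [s, c]) (by simp [s, c])

/-- For `n` a multiple of 4, distinct interior vertices `i, j` (both
different from the endpoints `a`, `b` of the missing edge) and any `t`, the fidelity
satisfies `|[exp(-ιtH(K_n^-))]_{ij}| ≤ 2/n`: no perfect state transfer between adjacent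
interior vertices of `K_n^-`. -/
theorem complete_minus_edge_interior_bound (n : ℕ) (hn : 4 ≤ n) (hmod : n % 4 = 0)
    (t : ℝ) (a b : Fin n) (ha : (a : ℕ) = 0) (hb : (b : ℕ) = n - 1)
    (P : Matrix (Fin n) (Fin n) ℂ)
    (hP : P = Matrix.of fun i j =>
      if (i = a ∧ j = a) ∨ (i = b ∧ j = b) then 1
      else if (i = a ∧ j = b) ∨ (i = b ∧ j = a) then -1 else 0)
    (H : Matrix (Fin n) (Fin n) ℂ)
    (hH : H = (n * (n - 1) / 2 - 1 : ℂ) • (1 : Matrix (Fin n) (Fin n) ℂ)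
        - 2 • ((n : ℂ) • (1 : Matrix (Fin n) (Fin n) ℂ)
            - (Matrix.of fun _ _ : Fin n => (1 : ℂ)) - P))
    (i j : Fin n) (hij : i ≠ j) (hia : i ≠ a) (hib : i ≠ b) (hja : j ≠ a) (hjb : j ≠ b) :
    ‖NormedSpace.exp ((-(Complex.I * t)) • H) i j‖ ≤ 2 / n :=
  complete_minus_edge_interior_bound_general n hn t a b ha hb P hP H hH i j hij hia hib
end

section
/- Let n be a positive multiple of 4 and let M be a perfect matching on {1,...,n}. For the graph G = K_n minus the n/2 edges of M, with XYZ Hamiltonian H(G) = (n(n-1)/2 - n/2)·I - 2·L(G), perfect state transfer occurs at time t = π/4 + π·k/2 between each matched pair {i,j} ∈ M: |[exp(-ι·t·H(G))]_{ij}| = 1. -/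
/-!
Write `J` for the all-ones matrix and `P` for the adjacency matrix of `M`. Since `Kₙ - M` is
the complement of the `1`-regular graph `M`, its Laplacian is `n - J - (1 - P)`, so `-itH` is
a scalar plus `-2itJ + 2itP`, where `J` and `P` commute, `J² = nJ` and `P² = 1`. Hence
`exp(-itH)` is a phase times `exp(-2itJ) exp(2itP)`. The first factor is
`1 + ((e^{-2itn} - 1)/n) J = 1`, because `2tn ∈ 2πℤ` when `4 ∣ n`; the second is
`cos 2t + i sin 2t · P`, whose `(i, j)` entry for a matched pair has modulus
`|sin 2t| = |cos kπ| = 1`.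
-/

open Matrix NormedSpace
open scoped Nat

theorem Complex.hasSum_exp (s : ℂ) :
    HasSum (fun k : ℕ => (k !⁻¹ : ℂ) * s ^ k) (Complex.exp s) := by
  simpa [Complex.exp_eq_exp_ℂ] using exp_series_hasSum_exp' (𝕂 := ℂ) s

namespace NormedSpace

variable {A : Type*} [Ring A] [Algebra ℂ A] [TopologicalSpace A] [IsTopologicalRing A]
  [ContinuousSMul ℂ A] [T2Space A]

theorem exp_smul_of_isIdempotentElem {p : A} (hp : IsIdempotentElem p) (s : ℂ) :
    exp (s • p) = 1 - p + Complex.exp s • p := by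
  have hterm : ∀ k : ℕ, (k !⁻¹ : ℂ) • (s • p) ^ k
      = Pi.single (M := fun _ => A) 0 (1 - p) k + ((k !⁻¹ : ℂ) * s ^ k) • p := by
    rintro (_ | k)
    · simp
    · rw [smul_pow, hp.pow_succ_eq, smul_smul, Pi.single_eq_of_ne k.succ_ne_zero, zero_add]
  rw [exp_eq_tsum ℂ]
  exact (funext hterm ▸ (hasSum_pi_single 0 (1 - p)).add
    ((Complex.hasSum_exp s).smul_const p)).tsum_eq

theorem exp_smul_of_mul_self_eq_one {u : A} (hu : u * u = 1) (s : ℂ) :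
    exp (s • u) = Complex.cosh s • 1 + Complex.sinh s • u := by
  have hterm : ∀ k : ℕ, (k !⁻¹ : ℂ) • (s • u) ^ k
      = (((k !⁻¹ : ℂ) * s ^ k + (k !⁻¹ : ℂ) * (-s) ^ k) / 2) • 1
        + (((k !⁻¹ : ℂ) * s ^ k - (k !⁻¹ : ℂ) * (-s) ^ k) / 2) • u := by
    intro k
    rw [smul_pow, smul_smul]
    rcases k.even_or_odd with ⟨m, rfl⟩ | ⟨m, rfl⟩
    · rw [← two_mul, pow_mul, pow_mul, pow_mul, sq u, hu, one_pow, neg_sq]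
      module
    · rw [pow_succ, pow_succ, pow_succ, pow_mul, pow_mul, pow_mul, sq u, hu, one_pow, one_mul,
        neg_sq]
      module
  have hcosh := ((Complex.hasSum_exp s).add (Complex.hasSum_exp (-s))).div_const 2
  have hsinh := ((Complex.hasSum_exp s).sub (Complex.hasSum_exp (-s))).div_const 2
  rw [← Complex.two_cosh, mul_div_cancel_left₀ _ two_ne_zero] at hcosh
  rw [← Complex.two_sinh, mul_div_cancel_left₀ _ two_ne_zero] at hsinh
  rw [exp_eq_tsum ℂ]
  exact (funext hterm ▸ (hcosh.smul_const 1).add (hsinh.smul_const u)).tsum_eq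

end NormedSpace

theorem Matrix.exp_smul_of_one {m : Type*} [Fintype m] [DecidableEq m] (s : ℂ) :
    exp (s • of 1 : Matrix m m ℂ)
      = 1 + ((Complex.exp (s * Fintype.card m) - 1) / Fintype.card m) • of 1 := by
  rcases isEmpty_or_nonempty m with hm | hm
  · exact Subsingleton.elim _ _
  set N : ℂ := (Fintype.card m : ℂ)
  have hN : N ≠ 0 := Nat.cast_ne_zero.mpr Fintype.card_ne_zero
  have hJ : (of 1 : Matrix m m ℂ) * of 1 = N • of 1 := by
    ext
    simp [Matrix.mul_apply, N]
  have hQ : IsIdempotentElem (N⁻¹ • of 1 : Matrix m m ℂ) := by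
    rw [IsIdempotentElem, smul_mul_smul_comm, hJ, smul_smul, inv_mul_cancel_right₀ hN]
  rw [show s • of 1 = (s * N) • (N⁻¹ • of 1 : Matrix m m ℂ) by
      rw [smul_smul, mul_inv_cancel_right₀ hN],
    exp_smul_of_isIdempotentElem hQ]
  module

namespace SimpleGraph

variable {V R : Type*} [Fintype V]

theorem Subgraph.IsPerfectMatching.isRegularOfDegree_spanningCoe {G : SimpleGraph V}
    {M : G.Subgraph} (hM : M.IsPerfectMatching) [DecidableRel M.spanningCoe.Adj] :
    M.spanningCoe.IsRegularOfDegree 1 := by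
  intro v
  apply SimpleGraph.degree_eq_one_iff_existsUnique_adj.mpr
  simpa using isPerfectMatching_iff.mp hM v

theorem IsRegularOfDegree.commute_of_one_adjMatrix [NonAssocSemiring R] {G : SimpleGraph V}
    [DecidableRel G.Adj] {d : ℕ} (h : G.IsRegularOfDegree d) :
    Commute (of 1) (G.adjMatrix R) := by
  ext v w
  simp [h.degree_eq]

variable [DecidableEq V]

theorem lapMatrix_compl [AddGroupWithOne R] (G : SimpleGraph V) [DecidableRel G.Adj] :
    Gᶜ.lapMatrix R = Fintype.card V • 1 - of 1 - G.lapMatrix R := by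
  ext v w
  obtain rfl | hvw := eq_or_ne v w
  · have := G.degree_lt_card_verts v
    simp [lapMatrix, degMatrix, degree_compl, Matrix.natCast_apply, Nat.cast_sub,
      Nat.le_sub_one_of_lt this, Nat.one_le_of_lt this]
  · by_cases h : G.Adj v w <;> simp [lapMatrix, degMatrix, Matrix.natCast_apply, hvw, h]

theorem IsRegularOfDegree.lapMatrix_eq [AddGroupWithOne R] {G : SimpleGraph V}
    [DecidableRel G.Adj] {d : ℕ} (h : G.IsRegularOfDegree d) :
    G.lapMatrix R = d • 1 - G.adjMatrix R := by
  ext v w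
  obtain rfl | hvw := eq_or_ne v w <;>
    simp [lapMatrix, degMatrix, Matrix.natCast_apply, h.degree_eq, *]

theorem IsRegularOfDegree.adjMatrix_mul_self_eq_one [NonAssocSemiring R] {G : SimpleGraph V}
    [DecidableRel G.Adj] (h : G.IsRegularOfDegree 1) : G.adjMatrix R * G.adjMatrix R = 1 := by
  ext v w
  obtain rfl | hvw := eq_or_ne v w
  · rw [adjMatrix_mul_self_apply_self, h.degree_eq, Nat.cast_one, one_apply_eq]
  · obtain ⟨u, hvu, hu⟩ := degree_eq_one_iff_existsUnique_adj.mp (h.degree_eq v)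
    obtain ⟨x, -, hx⟩ := degree_eq_one_iff_existsUnique_adj.mp (h.degree_eq u)
    have huw : ¬ G.Adj u w := fun huw => hvw ((hx v hvu.symm).trans (hx w huw).symm)
    rw [adjMatrix_mul_apply, one_apply_ne hvw]
    refine Finset.sum_eq_zero fun y hy => ?_
    rw [hu y ((mem_neighborFinset G v y).mp hy), adjMatrix_apply, if_neg huw]

theorem Subgraph.IsPerfectMatching.lapMatrix_top_deleteEdges [AddGroupWithOne R]
    {M : (⊤ : SimpleGraph V).Subgraph} (hM : M.IsPerfectMatching)
    [DecidableRel M.spanningCoe.Adj]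
    [DecidableRel ((⊤ : SimpleGraph V).deleteEdges M.edgeSet).Adj] :
    ((⊤ : SimpleGraph V).deleteEdges M.edgeSet).lapMatrix R
      = Fintype.card V • 1 - of 1 - (1 - M.spanningCoe.adjMatrix R) := by
  convert lapMatrix_compl (R := R) M.spanningCoe using 2
  · rw [← Subgraph.edgeSet_spanningCoe, deleteEdges_edgeSet, top_sdiff]
  · rw [hM.isRegularOfDegree_spanningCoe.lapMatrix_eq, one_smul]

end SimpleGraph

theorem Complex.exp_neg_two_mul_I_mul_natCast_eq_one {t : ℝ} {k n : ℕ}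
    (ht : t = Real.pi / 4 + Real.pi * k / 2) (hn : 4 ∣ n) :
    Complex.exp (-(2 * Complex.I * t) * n) = 1 := by
  obtain ⟨q, rfl⟩ := hn
  refine Complex.exp_eq_one_iff.mpr ⟨-(q * (2 * k + 1)), ?_⟩
  rw [ht]
  push_cast
  ring

theorem Complex.norm_sin_two_mul_eq_one {t : ℝ} {k : ℕ}
    (ht : t = Real.pi / 4 + Real.pi * k / 2) : ‖Complex.sin (2 * t)‖ = 1 := by
  have h2t : 2 * t = k * Real.pi + Real.pi / 2 := by rw [ht]; ring
  rw [← Complex.ofReal_ofNat, ← Complex.ofReal_mul, ← Complex.ofReal_sin, Complex.norm_real,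
    h2t, Real.sin_add_pi_div_two, Real.cos_nat_mul_pi]
  simp

theorem complete_minus_matching_pst_general (n : ℕ) (hmod : n % 4 = 0)
    (M : (⊤ : SimpleGraph (Fin n)).Subgraph) (hM : M.IsPerfectMatching)
    (k : ℕ) (t : ℝ) (ht : t = Real.pi / 4 + Real.pi * k / 2)
    (H : Matrix (Fin n) (Fin n) ℂ)
    (hH : H = ((n * (n - 1) / 2 - n / 2 : ℂ)) • (1 : Matrix (Fin n) (Fin n) ℂ)
        - 2 • @SimpleGraph.lapMatrix (Fin n) ℂ _
            ((⊤ : SimpleGraph (Fin n)).deleteEdges M.edgeSet) (Classical.decRel _) _ _) :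
    ∀ i j : Fin n, M.Adj i j →
      ‖NormedSpace.exp ((-(Complex.I * t)) • H) i j‖ = 1 := by
  intro i j hij
  classical
  rw [Subsingleton.elim (Classical.decRel _) inferInstance, hM.lapMatrix_top_deleteEdges,
    Fintype.card_fin] at hH
  have hP := hM.isRegularOfDegree_spanningCoe
  set P := M.spanningCoe.adjMatrix ℂ
  set c : ℂ := -(Complex.I * t) * ((n * (n - 1) / 2 - n / 2 : ℂ) - 2 * n + 2)
  have hsplit : (-(Complex.I * t)) • H
      = c • 1 + ((-(2 * Complex.I * t)) • of 1 + (2 * t * Complex.I) • P) := by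
    rw [hH]
    module
  have hexp : exp ((-(Complex.I * t)) • H)
      = Complex.exp c • (Complex.cosh (2 * t * Complex.I) • 1
        + Complex.sinh (2 * t * Complex.I) • P) := by
    rw [hsplit, Matrix.exp_add_of_commute _ _ ((Commute.one_left _).smul_left c),
      Matrix.exp_add_of_commute _ _ ((hP.commute_of_one_adjMatrix.smul_left _).smul_right _),
      exp_smul_of_one, Fintype.card_fin,
      Complex.exp_neg_two_mul_I_mul_natCast_eq_one ht (Nat.dvd_of_mod_eq_zero hmod),
      sub_self, zero_div, zero_smul, add_zero, one_mul, exp_smul_of_isIdempotentElem .one,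
      exp_smul_of_mul_self_eq_one hP.adjMatrix_mul_self_eq_one, sub_self, zero_add,
      smul_mul_assoc, one_mul]
  have hc : ‖Complex.exp c‖ = 1 := by
    simp [Complex.norm_exp, c]
  rw [hexp, Matrix.smul_apply, Matrix.add_apply, Matrix.smul_apply, Matrix.smul_apply,
    one_apply_ne hij.ne]
  simp [P, hij, hc, Complex.sinh_mul_I, Complex.norm_sin_two_mul_eq_one ht]

/-- Let `n` be a positive multiple of 4 and `M` a perfect matching of the
complete graph on `n` vertices. For `G = K_n` minus the edges of `M`, with XYZ
Hamiltonian `H(G) = (n(n-1)/2 - n/2)·I - 2·L(G)`, perfect state transfer occurs at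
`t = π/4 + πk/2` between each matched pair `{i,j}`. -/
theorem complete_minus_matching_pst (n : ℕ) (hn : 0 < n) (hmod : n % 4 = 0)
    (M : (⊤ : SimpleGraph (Fin n)).Subgraph) (hM : M.IsPerfectMatching)
    (k : ℕ) (t : ℝ) (ht : t = Real.pi / 4 + Real.pi * k / 2)
    (H : Matrix (Fin n) (Fin n) ℂ)
    (hH : H = ((n * (n - 1) / 2 - n / 2 : ℂ)) • (1 : Matrix (Fin n) (Fin n) ℂ)
        - 2 • @SimpleGraph.lapMatrix (Fin n) ℂ _
            ((⊤ : SimpleGraph (Fin n)).deleteEdges M.edgeSet) (Classical.decRel _) _ _) :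
    ∀ i j : Fin n, M.Adj i j →
      ‖NormedSpace.exp ((-(Complex.I * t)) • H) i j‖ = 1 :=
  complete_minus_matching_pst_general n hmod M hM k t ht H hH
end
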